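/- Assume the functions {x ↦ exp(αᵀx)}_{α∈𝒜} are linearly independent on X. Then the circuit graph G_X(𝒜) is a closed subset of ℝ^𝒜 × ℝ. -/

import Mathlib

open Finset

/-- Dot product on `Fin n → ℝ`. -/
noncomputable def dotp {n : ℕ} (y x : Fin n → ℝ) : ℝ := ∑ i, y i * x i

/-- Support function `σ_X : ℝⁿ → ℝ ∪ {±∞}` of a set `X ⊆ ℝⁿ`. -/
noncomputable def suppFn {n : ℕ} (X : Set (Fin n → ℝ)) (y : Fin n → ℝ) : EReal :=
  ⨆ x ∈ X, ((dotp y x : ℝ) : EReal)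

/-- The linear map `𝒜 : ℝ^𝒜 → ℝⁿ`, `ν ↦ Σ_α ν_α α`. -/
noncomputable def Amap {n m : ℕ} (A : Fin m → Fin n → ℝ) (ν : Fin m → ℝ) : Fin n → ℝ :=
  fun j => ∑ i, ν i * A i j

/-- `N_β = {ν : ν_α ≥ 0 (α ≠ β), Σ ν_α = 0}`. -/
def Nbeta {m : ℕ} (b : Fin m) : Set (Fin m → ℝ) :=
  {ν | (∀ i, i ≠ b → 0 ≤ ν i) ∧ ∑ i, ν i = 0}

/-- Two vectors are proportional if one is a scalar multiple of the other. -/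
def Proportional {m : ℕ} (u v : Fin m → ℝ) : Prop :=
  ∃ t : ℝ, u = t • v ∨ v = t • u

/-- The augmented support function `ν ↦ σ_X(-𝒜ν)`. -/
noncomputable def sigA {n m : ℕ} (X : Set (Fin n → ℝ)) (A : Fin m → Fin n → ℝ)
    (ν : Fin m → ℝ) : EReal :=
  suppFn X (-(Amap A ν))

/-- The map `ν ↦ σ_X(-𝒜ν)` is affine on the segment `[ν1, ν2]`. -/
def SigmaAffineOnSeg {n m : ℕ} (X : Set (Fin n → ℝ)) (A : Fin m → Fin n → ℝ)
    (ν1 ν2 : Fin m → ℝ) : Prop :=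
  ∀ t : ℝ, t ∈ Set.Icc (0:ℝ) 1 →
    sigA X A (t • ν1 + (1 - t) • ν2) =
      (t : EReal) * sigA X A ν1 + ((1 - t : ℝ) : EReal) * sigA X A ν2

/-- `ν` is an `X`-circuit of `𝒜` (with negative index allowed only at `b`). -/
def IsXCircuit {n m : ℕ} (X : Set (Fin n → ℝ)) (A : Fin m → Fin n → ℝ)
    (b : Fin m) (ν : Fin m → ℝ) : Prop :=
  ν ∈ Nbeta b ∧ ν ≠ 0 ∧ sigA X A ν < ⊤ ∧
  ¬ ∃ (ν1 ν2 : Fin m → ℝ) (θ : ℝ), ν1 ∈ Nbeta b ∧ ν2 ∈ Nbeta b ∧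
      ¬ Proportional ν1 ν2 ∧ θ ∈ Set.Ioo (0:ℝ) 1 ∧
      ν = θ • ν1 + (1 - θ) • ν2 ∧ SigmaAffineOnSeg X A ν1 ν2

/-- All finite nonnegative combinations of elements of `S` (including `0`). -/
def coneHull {E : Type*} [AddCommMonoid E] [SMul ℝ E] (S : Set E) : Set E :=
  {x | ∃ (k : ℕ) (t : Fin k → ℝ) (v : Fin k → E),
    (∀ j, 0 ≤ t j) ∧ (∀ j, v j ∈ S) ∧ x = ∑ j, t j • v j}

/-- `v` is an edge generator of the convex cone `K`. -/
def IsEdgeGenerator {E : Type*} [AddCommMonoid E] [SMul ℝ E] (K : Set E) (v : E) : Prop :=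
  v ≠ 0 ∧ v ∈ K ∧ ∀ u ∈ K, ∀ w ∈ K, v = u + w →
    (∃ a : ℝ, 0 ≤ a ∧ u = a • v) ∧ (∃ b : ℝ, 0 ≤ b ∧ w = b • v)

/-- The `X`-AGE cone `C_X(𝒜, β)`, as a cone of coefficient vectors. -/
def AgeCone {n m : ℕ} (X : Set (Fin n → ℝ)) (A : Fin m → Fin n → ℝ) (b : Fin m) :
    Set (Fin m → ℝ) :=
  {c | (∀ i, i ≠ b → 0 ≤ c i) ∧ ∀ x ∈ X, 0 ≤ ∑ i, c i * Real.exp (dotp (A i) x)}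

/-- The `X`-SAGE cone `C_X(𝒜) = Σ_β C_X(𝒜, β)`. -/
def Sage {n m : ℕ} (X : Set (Fin n → ℝ)) (A : Fin m → Fin n → ℝ) : Set (Fin m → ℝ) :=
  {c | ∃ f : Fin m → (Fin m → ℝ), (∀ b, f b ∈ AgeCone X A b) ∧ c = ∑ b, f b}

/-- One summand of the relative entropy, with the conventions `0·log 0 = 0` and
`D = ∞` if `a > 0` while `c ≤ 0`. -/
noncomputable def relEnt (a c : ℝ) : EReal :=
  if a = 0 then 0 else if 0 < c then ((a * Real.log (a / c) : ℝ) : EReal) else ⊤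

/-- The relative entropy `D(ν_{∖β}, e · c_{∖β})`. -/
noncomputable def relEntSum {m : ℕ} (b : Fin m) (ν c : Fin m → ℝ) : EReal :=
  ∑ i ∈ Finset.univ.erase b, relEnt (ν i) (Real.exp 1 * c i)

/-- Condition (★): `ν ∈ N_β`, `ν ≠ 0`, `σ_X(-𝒜ν) + D(ν_{∖β}, e c_{∖β}) ≤ c_β`. -/
def StarCond {n m : ℕ} (X : Set (Fin n → ℝ)) (A : Fin m → Fin n → ℝ)
    (b : Fin m) (c ν : Fin m → ℝ) : Prop :=
  ν ∈ Nbeta b ∧ ν ≠ 0 ∧ sigA X A ν + relEntSum b ν c ≤ (c b : EReal)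

/-- The `λ`-witnessed AGE cone `C_X(𝒜, λ)` for a normalized `λ` with `λ_β = -1`. -/
noncomputable def WitnessCone {n m : ℕ} (X : Set (Fin n → ℝ)) (A : Fin m → Fin n → ℝ)
    (b : Fin m) (l : Fin m → ℝ) : Set (Fin m → ℝ) :=
  {c | (∀ i, i ≠ b → 0 ≤ c i) ∧
    (-(c b)) * Real.exp ((sigA X A l).toReal) ≤
      ∏ i ∈ Finset.univ.filter (fun i => 0 < l i), (c i / l i) ^ (l i)}

/-- Normalized `X`-circuits in `N_β`. -/
def LambdaB {n m : ℕ} (X : Set (Fin n → ℝ)) (A : Fin m → Fin n → ℝ) (b : Fin m) :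
    Set (Fin m → ℝ) :=
  {l | IsXCircuit X A b l ∧ l b = -1}

/-- All normalized `X`-circuits of `𝒜`. -/
def Lambda {n m : ℕ} (X : Set (Fin n → ℝ)) (A : Fin m → Fin n → ℝ) : Set (Fin m → ℝ) :=
  ⋃ b, LambdaB X A b

/-- Functional form `φ_λ = (λ, σ_X(-𝒜λ)) ∈ ℝ^𝒜 × ℝ`. -/
noncomputable def phiVec {n m : ℕ} (X : Set (Fin n → ℝ)) (A : Fin m → Fin n → ℝ)
    (l : Fin m → ℝ) : (Fin m → ℝ) × ℝ :=
  (l, (sigA X A l).toReal)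

/-- Functional form as an affine function `φ_λ(y) = Σ y_α λ_α + σ_X(-𝒜λ)`. -/
noncomputable def phiFun {n m : ℕ} (X : Set (Fin n → ℝ)) (A : Fin m → Fin n → ℝ)
    (l : Fin m → ℝ) (y : Fin m → ℝ) : ℝ :=
  (∑ i, y i * l i) + (sigA X A l).toReal

/-- The circuit graph `G_X(𝒜)`. -/
noncomputable def circuitGraph {n m : ℕ} (X : Set (Fin n → ℝ)) (A : Fin m → Fin n → ℝ) :
    Set ((Fin m → ℝ) × ℝ) :=
  coneHull ((phiVec X A '' Lambda X A) ∪ {((0 : Fin m → ℝ), (1 : ℝ))})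

/-- The reduced normalized `X`-circuits `Λ*_X(𝒜)`. -/
noncomputable def LambdaStar {n m : ℕ} (X : Set (Fin n → ℝ)) (A : Fin m → Fin n → ℝ) :
    Set (Fin m → ℝ) :=
  {l | l ∈ Lambda X A ∧ IsEdgeGenerator (circuitGraph X A) (phiVec X A l)}

/-- `λ`-witnessed AGE cone for a normalized circuit, with `β` recovered from `λ`. -/
noncomputable def WitnessConeL {n m : ℕ} (X : Set (Fin n → ℝ)) (A : Fin m → Fin n → ℝ)
    (l : Fin m → ℝ) : Set (Fin m → ℝ) :=
  ⋃ b ∈ {b : Fin m | l b = -1}, WitnessCone X A b l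

/-- Dual cone of a set of coefficient vectors in `ℝ^𝒜`. -/
def dualConeV {m : ℕ} (K : Set (Fin m → ℝ)) : Set (Fin m → ℝ) :=
  {v | ∀ c ∈ K, 0 ≤ ∑ i, v i * c i}

/-- Dual cone of a subset of `ℝ^𝒜 × ℝ`. -/
def dualConeP {m : ℕ} (K : Set ((Fin m → ℝ) × ℝ)) : Set ((Fin m → ℝ) × ℝ) :=
  {p | ∀ q ∈ K, 0 ≤ (∑ i, p.1 i * q.1 i) + p.2 * q.2}

/-- The basis functions `x ↦ exp(αᵀx)`, `α ∈ 𝒜`, are linearly independent on `X`. -/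
def ExpLinIndep {n m : ℕ} (X : Set (Fin n → ℝ)) (A : Fin m → Fin n → ℝ) : Prop :=
  LinearIndependent ℝ (fun i : Fin m => fun x : X => Real.exp (dotp (A i) (x : Fin n → ℝ)))

/-- `X` is a polyhedron: an intersection of finitely many closed halfspaces. -/
def IsPolyhedron {n : ℕ} (X : Set (Fin n → ℝ)) : Prop :=
  ∃ (k : ℕ) (a : Fin k → Fin n → ℝ) (bb : Fin k → ℝ),
    X = {x | ∀ i, dotp (a i) x ≤ bb i}

/-- Minkowski sum `Σ_{l ∈ Λ} C(l)` (finite sums, one summand per `l`;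
the empty sum gives `{0}`). -/
def MinkSumOver {m : ℕ} (Λ : Set (Fin m → ℝ)) (C : (Fin m → ℝ) → Set (Fin m → ℝ)) :
    Set (Fin m → ℝ) :=
  {c | ∃ (s : Finset (Fin m → ℝ)) (f : (Fin m → ℝ) → (Fin m → ℝ)),
    (↑s ⊆ Λ) ∧ (∀ l ∈ s, f l ∈ C l) ∧ c = ∑ l ∈ s, f l}


/-!
The circuit graph is the sum over `β` of the cones
`E_β = {(ν, τ) | ν ∈ N_β, σ_X(-𝒜ν) ≤ τ}`. Each `E_β` is a closed cone with a compact base, so by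
Minkowski's theorem it is generated by its extreme rays, and every extreme ray of `E_β` is spanned
by `(0, 1)` or by the functional form of a normalized `X`-circuit in `N_β`.

A finite sum of closed cones is closed as soon as summands adding up to zero must all vanish. If
`∑_β (ν^β, τ^β) = 0` with `(ν^β, τ^β) ∈ E_β`, the affine functions `x ↦ τ^β + Σ_α ν^β_α αᵀx` are
nonnegative on `X` and sum to zero, so each vanishes on `X`. Linear independence of the
exponentials makes the functions `x ↦ αᵀx` pairwise different modulo constants on `X`, and then a
sum-of-squares identity forces every `ν^β`, hence every `τ^β`, to vanish.
-/

open Filter Topology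

theorem coneHull_eq_hull {E : Type*} [AddCommGroup E] [Module ℝ E] (S : Set E) :
    coneHull S = PointedCone.hull ℝ S := by
  ext x
  rw [SetLike.mem_coe, Submodule.mem_span_set']
  constructor
  · rintro ⟨k, t, v, ht, hv, rfl⟩
    exact ⟨k, fun j => ⟨t j, ht j⟩, fun j => ⟨v j, hv j⟩, rfl⟩
  · rintro ⟨k, t, v, rfl⟩
    exact ⟨k, fun j => t j, fun j => v j, fun j => (t j).2, fun j => (v j).2, rfl⟩

theorem Submodule.mem_iSup_iff_exists_sum_fintype {R M ι : Type*} [Semiring R]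
    [AddCommMonoid M] [Module R M] [Fintype ι] {p : ι → Submodule R M} {x : M} :
    x ∈ ⨆ i, p i ↔ ∃ f : ι → M, (∀ i, f i ∈ p i) ∧ ∑ i, f i = x := by
  classical
  refine ⟨fun hx => ?_, fun ⟨f, hf, hfx⟩ => hfx ▸ sum_mem_iSup hf⟩
  refine Submodule.iSup_induction p
    (motive := fun x => ∃ f : ι → M, (∀ i, f i ∈ p i) ∧ ∑ i, f i = x) hx (fun i x hx => ?_)
    ⟨0, fun i => zero_mem _, by simp⟩ ?_
  · refine ⟨Pi.single i x, fun j => ?_, by simp⟩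
    rcases eq_or_ne j i with rfl | hji
    · simpa using hx
    · simp [hji]
  · rintro _ _ ⟨f, hf, rfl⟩ ⟨g, hg, rfl⟩
    exact ⟨f + g, fun i => add_mem (hf i) (hg i), by simp [sum_add_distrib]⟩

theorem EReal.ne_top_of_coe_mul_add_coe_mul_ne_top {s t : ℝ} (hs : 0 < s) (ht : 0 < t)
    {a b : EReal} (ha : a ≠ ⊥) (hb : b ≠ ⊥) (h : (s : EReal) * a + t * b ≠ ⊤) :
    a ≠ ⊤ ∧ b ≠ ⊤ := by
  induction a <;> induction b <;>
    simp_all [EReal.mul_top_of_pos, ← EReal.coe_mul, ← EReal.coe_add]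

theorem eq_zero_of_sum_smul_eq_zero {ι κ : Type*} [Fintype ι] [Fintype κ] {y : ι → κ → ℝ}
    (hy : Function.Injective y) {μ : ι → ι → ℝ} (hμ : ∀ b a, a ≠ b → 0 ≤ μ b a)
    (hrow : ∀ b, ∑ a, μ b a = 0) (hcol : ∑ b, μ b = 0) (hbary : ∀ b, ∑ a, μ b a • y a = 0) :
    μ = 0 := by
  classical
  set q : ι → ι → ℝ := fun a b => (y a - y b) ⬝ᵥ (y a - y b)
  -- `∑ b, ∑ a, μ b a * ‖y a - y b‖²` vanishes, while each of its terms is nonnegative.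
  have hexpand : ∀ b, ∑ a, μ b a * q a b = ∑ a, μ b a * (y a ⬝ᵥ y a) := by
    intro b
    have hcross : ∑ a, μ b a * (y a ⬝ᵥ y b) = 0 := by
      simp only [← smul_eq_mul, ← smul_dotProduct, ← sum_dotProduct, hbary b, zero_dotProduct]
    have hconst : ∑ a, μ b a * (y b ⬝ᵥ y b) = 0 := by rw [← sum_mul, hrow b, zero_mul]
    have hq : ∀ a, μ b a * q a b = μ b a * (y a ⬝ᵥ y a) - 2 * (μ b a * (y a ⬝ᵥ y b)) +
        μ b a * (y b ⬝ᵥ y b) := fun a => by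
      simp only [q, sub_dotProduct, dotProduct_sub, dotProduct_comm (y b) (y a)]
      ring
    rw [sum_congr rfl fun a _ => hq a, sum_add_distrib, sum_sub_distrib, ← mul_sum, hcross, hconst]
    ring
  have hterm : ∀ b a, 0 ≤ μ b a * q a b := fun b a => by
    rcases eq_or_ne a b with rfl | hab
    · simp [q]
    · exact mul_nonneg (hμ b a hab) (dotProduct_self_star_nonneg _)
  have htotal : ∑ b, ∑ a, μ b a * q a b = 0 := by
    have hcol' : ∀ a, ∑ b, μ b a = 0 := fun a => by simpa using congrFun hcol a
    simp only [hexpand]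
    rw [sum_comm]
    simp only [← sum_mul, hcol', zero_mul, sum_const_zero]
  have hoff : ∀ b a, a ≠ b → μ b a = 0 := fun b a hab => by
    have h := (sum_eq_zero_iff_of_nonneg fun a _ => hterm b a).1
      ((sum_eq_zero_iff_of_nonneg fun b _ => sum_nonneg fun a _ => hterm b a).1 htotal b
        (mem_univ b)) a (mem_univ a)
    refine (mul_eq_zero.1 h).resolve_right fun hq => hab (hy ?_)
    exact sub_eq_zero.1 (dotProduct_self_eq_zero.1 hq)
  funext b a
  rcases eq_or_ne a b with rfl | hab
  · have h := hrow a
    rwa [← add_sum_erase _ _ (mem_univ a),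
      sum_eq_zero fun c hc => hoff a c (ne_of_mem_erase hc), add_zero] at h
  · exact hoff b a hab

section Minkowski

theorem IsCompact.exists_add_smul_mem_forall_notMem {E : Type*} [NormedAddCommGroup E]
    [NormedSpace ℝ E] {s : Set E} (hs : IsCompact s) {x : E} (hx : x ∈ s) {u : E} (hu : u ≠ 0) :
    ∃ t, 0 ≤ t ∧ x + t • u ∈ s ∧ ∀ r : ℝ, 0 < r → x + (t + r) • u ∉ s := by
  set T := (fun t : ℝ => x + t • u) ⁻¹' s
  obtain ⟨R, hR⟩ := hs.isBounded.subset_closedBall x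
  have hT : IsCompact T := by
    refine Metric.isCompact_of_isClosed_isBounded (hs.isClosed.preimage (by fun_prop))
      ((Metric.isBounded_closedBall (x := 0) (r := R / ‖u‖)).subset fun t ht => ?_)
    have := hR ht
    rw [Metric.mem_closedBall, dist_eq_norm, add_sub_cancel_left, norm_smul] at this
    rwa [mem_closedBall_zero_iff, le_div_iff₀ (norm_pos_iff.2 hu)]
  obtain ⟨t, htT, htmax⟩ := hT.exists_isGreatest ⟨0, by simpa [T] using hx⟩
  exact ⟨t, htmax (by simpa [T] using hx), htT, fun r hr hmem => by linarith [htmax hmem]⟩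

variable {F : Type*} [NormedAddCommGroup F] [InnerProductSpace ℝ F]
open scoped RealInnerProductSpace

theorem exists_unit_inner_sub_le {W : Submodule ℝ F} {s : Set F} (hs : IsCompact s)
    (hconv : Convex ℝ s) {p v : F} (hp : p ∈ s) (hsW : ∀ y ∈ s, y - p ∈ W) (hvW : v - p ∈ W)
    (hv : v ∉ s) : ∃ w ∈ W, ‖w‖ = 1 ∧ ∀ y ∈ s, ⟪w, y - p⟫ ≤ 2 * ‖v - p‖ := by
  obtain ⟨q, hq, hqmin⟩ := exists_norm_eq_iInf_of_complete_convex ⟨p, hp⟩ hs.isComplete hconv v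
  have hnormal := (norm_eq_iInf_iff_real_inner_le_zero hconv hq).1 hqmin
  have hvq : v - q ≠ 0 := sub_ne_zero.2 fun h => hv (h ▸ hq)
  have hvqW : v - q ∈ W := by
    rw [← sub_sub_sub_cancel_right v q p]
    exact W.sub_mem hvW (hsW q hq)
  have hvq_le : ‖v - q‖ ≤ ‖v - p‖ :=
    hqmin ▸ ciInf_le ⟨0, Set.forall_mem_range.2 fun _ => norm_nonneg _⟩ (⟨p, hp⟩ : s)
  have hunit : ‖‖v - q‖⁻¹ • (v - q)‖ = 1 := by
    rw [norm_smul, norm_inv, norm_norm, inv_mul_cancel₀ (norm_ne_zero_iff.2 hvq)]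
  refine ⟨‖v - q‖⁻¹ • (v - q), W.smul_mem _ hvqW, hunit, fun y hy => ?_⟩
  calc ⟪‖v - q‖⁻¹ • (v - q), y - p⟫
      = ‖v - q‖⁻¹ * ⟪v - q, y - q⟫ + ⟪‖v - q‖⁻¹ • (v - q), q - p⟫ := by
        rw [← real_inner_smul_left, ← inner_add_right, sub_add_sub_cancel]
    _ ≤ 0 + ‖‖v - q‖⁻¹ • (v - q)‖ * ‖q - p‖ := by
        gcongr
        · exact mul_nonpos_of_nonneg_of_nonpos (by positivity) (hnormal y hy)
        · exact real_inner_le_norm _ _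
    _ ≤ ‖q - v‖ + ‖v - p‖ := by
        rw [zero_add, hunit, one_mul]
        exact norm_sub_le_norm_sub_add_norm_sub q v p
    _ ≤ 2 * ‖v - p‖ := by rw [norm_sub_rev]; linarith

variable [FiniteDimensional ℝ F]

theorem exists_inner_le_of_forall_add_smul_notMem {W : Submodule ℝ F} {s : Set F}
    (hs : IsCompact s) (hconv : Convex ℝ s) {p u : F} (hp : p ∈ s) (hsW : ∀ y ∈ s, y - p ∈ W)
    (hu : u ∈ W) (hexit : ∀ t : ℝ, 0 < t → p + t • u ∉ s) :
    ∃ w ∈ W, w ≠ 0 ∧ ∀ y ∈ s, ⟪w, y⟫ ≤ ⟪w, p⟫ := by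
  -- Unit normals at the points of `s` nearest to `p + u / (k + 1)` accumulate at a supporting
  -- normal at `p`.
  have hstep : ∀ k : ℕ, ‖(p + (1 / ((k : ℝ) + 1)) • u) - p‖ = 1 / ((k : ℝ) + 1) * ‖u‖ := fun k => by
    rw [add_sub_cancel_left, norm_smul, Real.norm_of_nonneg (by positivity)]
  choose w hwW hwnorm hwle using fun k : ℕ =>
    exists_unit_inner_sub_le (v := p + (1 / ((k : ℝ) + 1)) • u) hs hconv hp hsW
    (by rw [add_sub_cancel_left]; exact W.smul_mem _ hu) (hexit _ (by positivity))
  obtain ⟨w₀, ⟨hw₀norm, hw₀W⟩, φ, hφ, hlim⟩ :=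
    ((isCompact_sphere (0 : F) 1).inter_right W.closed_of_finiteDimensional).tendsto_subseq
      (x := w) fun k => ⟨by simp [hwnorm k], hwW k⟩
  refine ⟨w₀, hw₀W, ne_zero_of_mem_unit_sphere ⟨w₀, hw₀norm⟩, fun y hy => ?_⟩
  have hbound : Tendsto (fun k => 2 * (1 / ((φ k : ℝ) + 1) * ‖u‖)) atTop (𝓝 0) := by
    simpa using ((tendsto_one_div_add_atTop_nhds_zero_nat (𝕜 := ℝ)).comp
      hφ.tendsto_atTop).mul_const ‖u‖ |>.const_mul 2
  have h := le_of_tendsto_of_tendsto' (hlim.inner tendsto_const_nhds) hbound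
    fun k => (hstep (φ k)).symm ▸ hwle (φ k) y hy
  rwa [inner_sub_right, sub_nonpos] at h

theorem exists_isExtreme_of_forall_add_smul_notMem {W : Submodule ℝ F} {s : Set F}
    (hs : IsCompact s) (hconv : Convex ℝ s) (hsW : ∀ y ∈ s, ∀ z ∈ s, y - z ∈ W) {p u : F}
    (hp : p ∈ s) (hu : u ∈ W) (hexit : ∀ t : ℝ, 0 < t → p + t • u ∉ s) :
    ∃ W' < W, ∃ t : Set F, IsExtreme ℝ s t ∧ p ∈ t ∧ IsCompact t ∧ Convex ℝ t ∧
      ∀ y ∈ t, ∀ z ∈ t, y - z ∈ W' := by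
  obtain ⟨w, hwW, hw0, hsup⟩ :=
    exists_inner_le_of_forall_add_smul_notMem hs hconv hp (fun y hy => hsW y hy p hp) hu hexit
  have hexp : IsExposed ℝ s ((innerSL ℝ w).toExposed s) :=
    ContinuousLinearMap.toExposed.isExposed
  refine ⟨W ⊓ LinearMap.ker (innerₛₗ ℝ w), inf_lt_left.2 fun h => hw0 ?_, _, hexp.isExtreme,
    ⟨hp, fun y hy => by simpa using hsup y hy⟩, hexp.isCompact hs, hexp.convex hconv,
    fun y hy z hz => ⟨hsW y hy.1 z hz.1, ?_⟩⟩
  · simpa using h hwW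
  · have hyz := le_antisymm (hz.2 y hy.1) (hy.2 z hz.1)
    simp only [innerSL_apply_apply] at hyz
    simp [inner_sub_right, hyz]

theorem subset_convexHull_extremePoints_of_forall_sub_mem (W : Submodule ℝ F) {s : Set F}
    (hs : IsCompact s) (hconv : Convex ℝ s) (hsW : ∀ y ∈ s, ∀ z ∈ s, y - z ∈ W) :
    s ⊆ convexHull ℝ (s.extremePoints ℝ) := by
  induction hd : Module.finrank ℝ W using Nat.strong_induction_on generalizing W s with
  | _ d ih =>
  have hface : ∀ p ∈ s, ∀ u ∈ W, (∀ r : ℝ, 0 < r → p + r • u ∉ s) →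
      p ∈ convexHull ℝ (s.extremePoints ℝ) := by
    intro p hp u hu hexit
    obtain ⟨W', hW', t, hext, hpt, htc, htconv, htW'⟩ :=
      exists_isExtreme_of_forall_add_smul_notMem hs hconv hsW hp hu hexit
    exact convexHull_mono hext.extremePoints_subset_extremePoints
      (ih _ (hd ▸ Submodule.finrank_lt_finrank_of_lt hW') W' htc htconv htW' rfl hpt)
  intro x hx
  rcases eq_or_ne W ⊥ with rfl | hW
  · refine subset_convexHull ℝ _ ⟨hx, fun y hy z hz _ => ?_⟩
    simpa [sub_eq_zero] using hsW y hy x hx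
  -- `x` lies between the two points where the line through `x` in direction `u` leaves `s`, and
  -- each of them lies in a face of `s` of smaller dimension.
  obtain ⟨u, hu, hu0⟩ := Submodule.exists_mem_ne_zero_of_ne_bot hW
  obtain ⟨a, ha, hpa, hexita⟩ := hs.exists_add_smul_mem_forall_notMem hx hu0
  obtain ⟨b, hb, hpb, hexitb⟩ := hs.exists_add_smul_mem_forall_notMem hx (neg_ne_zero.2 hu0)
  have hP := hface _ hpa u hu fun r hr h => hexita r hr (by rwa [add_smul, ← add_assoc])
  have hQ := hface _ hpb (-u) (neg_mem hu) fun r hr h =>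
    hexitb r hr (by rwa [add_smul, ← add_assoc])
  rcases ha.eq_or_lt with rfl | ha
  · simpa using hP
  have hab : 0 < a + b := by linarith
  convert convex_convexHull ℝ _ hP hQ (div_nonneg hb hab.le) (div_nonneg ha.le hab.le)
    (by rw [← add_div, add_comm, div_self hab.ne']) using 1
  match_scalars <;> field_simp <;> ring

theorem IsCompact.subset_convexHull_extremePoints {E : Type*} [NormedAddCommGroup E]
    [NormedSpace ℝ E] [FiniteDimensional ℝ E] {s : Set E} (hs : IsCompact s)
    (hconv : Convex ℝ s) : s ⊆ convexHull ℝ (s.extremePoints ℝ) := by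
  let e := toEuclidean (E := E)
  have h := subset_convexHull_extremePoints_of_forall_sub_mem ⊤ (hs.image e.continuous)
    (hconv.linear_image e.toLinearMap) fun _ _ _ _ => Submodule.mem_top
  have hhull : e '' convexHull ℝ (s.extremePoints ℝ) = convexHull ℝ (e '' s.extremePoints ℝ) :=
    e.toLinearMap.image_convexHull _
  rw [← image_extremePoints e, ← hhull] at h
  exact (Set.image_subset_image_iff e.injective).1 h

end Minkowski

section Cone
variable {E : Type*} [AddCommGroup E] [Module ℝ E] {K : PointedCone ℝ E}

theorem IsEdgeGenerator.smul {v : E} (hv : IsEdgeGenerator (K : Set E) v) {c : ℝ} (hc : 0 < c) :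
    IsEdgeGenerator (K : Set E) (c • v) := by
  obtain ⟨hv0, hvK, hray⟩ := hv
  refine ⟨smul_ne_zero hc.ne' hv0, K.smul_mem hc.le hvK, fun u hu w hw huw => ?_⟩
  have hv : v = c⁻¹ • u + c⁻¹ • w := by rw [← smul_add, ← huw, inv_smul_smul₀ hc.ne']
  obtain ⟨⟨a, ha, hua⟩, ⟨b, hb, hwb⟩⟩ :=
    hray _ (K.smul_mem (inv_nonneg.2 hc.le) hu) _ (K.smul_mem (inv_nonneg.2 hc.le) hw) hv
  refine ⟨⟨a, ha, ?_⟩, ⟨b, hb, ?_⟩⟩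
  · rw [smul_comm, ← hua, smul_inv_smul₀ hc.ne']
  · rw [smul_comm, ← hwb, smul_inv_smul₀ hc.ne']

theorem isEdgeGenerator_of_mem_extremePoints {ℓ : E →ₗ[ℝ] ℝ} (hℓ : ∀ p ∈ K, p ≠ 0 → 0 < ℓ p)
    {z : E} (hz : z ∈ ((K : Set E) ∩ {p | ℓ p = 1}).extremePoints ℝ) :
    IsEdgeGenerator (K : Set E) z := by
  obtain ⟨⟨hzK, hz1⟩, hzext⟩ := hz
  have hz1 : ℓ z = 1 := hz1
  have hℓ0 : ∀ p ∈ K, ℓ p = 0 → p = 0 := fun p hp h => by_contra fun hp0 => (hℓ p hp hp0).ne' h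
  have hℓnonneg : ∀ p ∈ K, 0 ≤ ℓ p := fun p hp => by
    rcases eq_or_ne p 0 with rfl | hp0
    · simp
    · exact (hℓ p hp hp0).le
  have hnormalize : ∀ p ∈ K, 0 < ℓ p → (ℓ p)⁻¹ • p ∈ (K : Set E) ∩ {p | ℓ p = 1} :=
    fun p hp hpos => ⟨K.smul_mem (inv_nonneg.2 hpos.le) hp,
      by simp [map_smul, inv_mul_cancel₀ hpos.ne']⟩
  have key : ∀ u ∈ K, ∀ w ∈ K, z = u + w → u = ℓ u • z := by
    intro u hu w hw huw
    have hsum : ℓ u + ℓ w = 1 := by rw [← map_add, ← huw, hz1]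
    rcases (hℓnonneg u hu).eq_or_lt with hu0 | hupos
    · rw [← hu0, zero_smul, hℓ0 u hu hu0.symm]
    rcases (hℓnonneg w hw).eq_or_lt with hw0 | hwpos
    · rw [hℓ0 w hw hw0.symm, add_zero] at huw
      rw [← huw, hz1, one_smul]
    have hseg : z ∈ openSegment ℝ ((ℓ u)⁻¹ • u) ((ℓ w)⁻¹ • w) :=
      ⟨ℓ u, ℓ w, hupos, hwpos, hsum, by
        rw [smul_inv_smul₀ hupos.ne', smul_inv_smul₀ hwpos.ne', huw]⟩
    rw [← (hzext (hnormalize u hu hupos) (hnormalize w hw hwpos) hseg),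
      smul_inv_smul₀ hupos.ne']
  refine ⟨fun h => by simp [h] at hz1, hzK, fun u hu w hw huw => ?_⟩
  exact ⟨⟨ℓ u, hℓnonneg u hu, key u hu w hw huw⟩,
    ⟨ℓ w, hℓnonneg w hw, key w hw u hu (huw.trans (add_comm u w))⟩⟩

end Cone

section FiniteDimensional
variable {E : Type*} [NormedAddCommGroup E] [NormedSpace ℝ E] [FiniteDimensional ℝ E]

theorem exists_pos_mul_norm_le {K : Set E} (hK : IsClosed K)
    (hKsmul : ∀ c : ℝ, 0 < c → ∀ p ∈ K, c • p ∈ K) {g : E → ℝ} (hg : Continuous g)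
    (hgsmul : ∀ c : ℝ, 0 < c → ∀ p, g (c • p) = c * g p) (hgpos : ∀ p ∈ K, p ≠ 0 → 0 < g p) :
    ∃ δ > 0, ∀ p ∈ K, δ * ‖p‖ ≤ g p := by
  have hg0 : g 0 = 0 := by
    have := hgsmul 2 two_pos 0
    rw [smul_zero] at this
    linarith
  have hunit : ∀ p ∈ K, p ≠ 0 → ‖p‖⁻¹ • p ∈ K ∩ Metric.sphere 0 1 := fun p hp hp0 =>
    ⟨hKsmul _ (inv_pos.2 (norm_pos_iff.2 hp0)) p hp, by simp [norm_smul, hp0]⟩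
  rcases (K ∩ Metric.sphere (0 : E) 1).eq_empty_or_nonempty with hS | hS
  · refine ⟨1, one_pos, fun p hp => ?_⟩
    obtain rfl : p = 0 := by_contra fun hp0 => hS.subset (hunit p hp hp0)
    simp [hg0]
  obtain ⟨q, hq, hmin⟩ :=
    ((isCompact_sphere 0 1).inter_left hK).exists_isMinOn hS hg.continuousOn
  refine ⟨g q, hgpos q hq.1 (ne_zero_of_mem_unit_sphere ⟨q, hq.2⟩), fun p hp => ?_⟩
  rcases eq_or_ne p 0 with rfl | hp0
  · simp [hg0]
  have hqp : g q ≤ g (‖p‖⁻¹ • p) := hmin (hunit p hp hp0)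
  rwa [hgsmul _ (inv_pos.2 (norm_pos_iff.2 hp0)), le_inv_mul_iff₀ (norm_pos_iff.2 hp0),
    mul_comm] at hqp

theorem isCompact_inter_setOf_eq_one {K : Set E} (hK : IsClosed K)
    (hKsmul : ∀ c : ℝ, 0 < c → ∀ p ∈ K, c • p ∈ K) (ℓ : E →ₗ[ℝ] ℝ)
    (hℓ : ∀ p ∈ K, p ≠ 0 → 0 < ℓ p) : IsCompact (K ∩ {p | ℓ p = 1}) := by
  have hℓc := ℓ.continuous_of_finiteDimensional
  obtain ⟨δ, hδ, hle⟩ := exists_pos_mul_norm_le hK hKsmul hℓc (fun c _ p => ℓ.map_smul c p) hℓ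
  refine Metric.isCompact_of_isClosed_isBounded (hK.inter (isClosed_eq hℓc continuous_const))
    ((Metric.isBounded_closedBall (x := 0) (r := δ⁻¹)).subset fun p hp => ?_)
  have := hle p hp.1
  rw [hp.2] at this
  rwa [mem_closedBall_zero_iff, ← mul_one δ⁻¹, le_inv_mul_iff₀ hδ]

theorem PointedCone.le_of_forall_isEdgeGenerator_mem {K G : PointedCone ℝ E}
    (hK : IsClosed (K : Set E))
    (ℓ : E →ₗ[ℝ] ℝ) (hℓ : ∀ p ∈ K, p ≠ 0 → 0 < ℓ p)
    (hG : ∀ z, IsEdgeGenerator (K : Set E) z → z ∈ G) : K ≤ G := by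
  intro p hp
  rcases eq_or_ne p 0 with rfl | hp0
  · exact G.zero_mem
  have hpos := hℓ p hp hp0
  have hbase : (ℓ p)⁻¹ • p ∈ (K : Set E) ∩ {p | ℓ p = 1} :=
    ⟨K.smul_mem (inv_nonneg.2 hpos.le) hp, by simp [inv_mul_cancel₀ hpos.ne']⟩
  have hcompact := isCompact_inter_setOf_eq_one hK (fun c hc p hp => K.smul_mem hc.le hp) ℓ hℓ
  have hconv : Convex ℝ ((K : Set E) ∩ {p | ℓ p = 1}) :=
    K.convex.inter (convex_hyperplane ℓ.isLinear 1)
  have hmem := convexHull_min (fun z hz => hG z (isEdgeGenerator_of_mem_extremePoints hℓ hz))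
    G.convex (hcompact.subset_convexHull_extremePoints hconv hbase)
  simpa [smul_inv_smul₀ hpos.ne'] using G.smul_mem hpos.le hmem

theorem PointedCone.isClosed_iSup {ι : Type*} [Fintype ι]
    {C : ι → PointedCone ℝ E} (hC : ∀ i, IsClosed (C i : Set E))
    (hpointed : ∀ f : ι → E, (∀ i, f i ∈ C i) → ∑ i, f i = 0 → ∀ i, f i = 0) :
    IsClosed ((⨆ i, C i : PointedCone ℝ E) : Set E) := by
  set P : Set (ι → E) := Set.univ.pi fun i => C i
  have hP : IsClosed P := isClosed_set_pi fun i _ => hC i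
  have hsum : Continuous fun f : ι → E => ∑ i, f i :=
    continuous_finsetSum _ fun i _ => continuous_apply i
  obtain ⟨δ, hδ, hle⟩ := exists_pos_mul_norm_le hP
    (fun c hc f hf i _ => (C i).smul_mem hc.le (hf i trivial)) hsum.norm
    (fun c hc f => by simp [← smul_sum, norm_smul, abs_of_pos hc])
    (fun f hf hf0 => norm_pos_iff.2 fun h => hf0 (funext (hpointed f (fun i => hf i trivial) h)))
  refine isClosed_of_closure_subset fun p hp => ?_
  obtain ⟨u, hu, hup⟩ := mem_closure_iff_seq_limit.1 hp
  choose F hF hFu using fun k => Submodule.mem_iSup_iff_exists_sum_fintype.1 (hu k)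
  obtain ⟨R, hR⟩ := isBounded_iff_forall_norm_le.1 (Metric.isBounded_range_of_tendsto u hup)
  have hFmem : ∀ k, F k ∈ P ∩ Metric.closedBall 0 (R / δ) := fun k => by
    refine ⟨fun i _ => hF k i, ?_⟩
    rw [mem_closedBall_zero_iff, le_div_iff₀ hδ, mul_comm]
    exact (hle _ fun i _ => hF k i).trans (hFu k ▸ hR _ ⟨k, rfl⟩)
  obtain ⟨f, hf, φ, hφ, hlim⟩ := ((isCompact_closedBall 0 _).inter_left hP).tendsto_subseq hFmem
  have hlim' : Tendsto (u ∘ φ) atTop (𝓝 (∑ i, f i)) := by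
    simpa only [Function.comp_def, hFu] using (hsum.tendsto f).comp hlim
  rw [tendsto_nhds_unique (hup.comp hφ.tendsto_atTop) hlim']
  exact Submodule.sum_mem_iSup fun i => hf.1 i trivial

end FiniteDimensional

section CircuitGraph
variable {n m : ℕ} {X : Set (Fin n → ℝ)} {A : Fin m → Fin n → ℝ} {b : Fin m}

noncomputable def exponents (A : Fin m → Fin n → ℝ) (x : Fin n → ℝ) : Fin m → ℝ :=
  fun i => dotp (A i) x

theorem dotp_neg_Amap (A : Fin m → Fin n → ℝ) (ν : Fin m → ℝ) (x : Fin n → ℝ) :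
    dotp (-(Amap A ν)) x = -(ν ⬝ᵥ exponents A x) := by
  simp only [dotp, Amap, exponents, dotProduct, Pi.neg_apply, neg_mul, sum_neg_distrib, sum_mul,
    mul_sum, mul_assoc]
  rw [sum_comm]

theorem sigA_le_coe_iff (ν : Fin m → ℝ) (r : ℝ) :
    sigA X A ν ≤ r ↔ ∀ x ∈ X, -(ν ⬝ᵥ exponents A x) ≤ r := by
  simp only [sigA, suppFn, iSup_le_iff, EReal.coe_le_coe_iff, dotp_neg_Amap]

theorem sigA_ne_bot (hX : X.Nonempty) (ν : Fin m → ℝ) : sigA X A ν ≠ ⊥ := by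
  obtain ⟨x, hx⟩ := hX
  exact ne_bot_of_le_ne_bot (EReal.coe_ne_bot _)
    (le_iSup₂ (f := fun x (_ : x ∈ X) => ((dotp (-(Amap A ν)) x : ℝ) : EReal)) x hx)

theorem apply_self_eq_neg_sum_of_mem_nbeta {ν : Fin m → ℝ} (h : ν ∈ Nbeta b) :
    ν b = -∑ i ∈ univ.erase b, ν i := by
  linarith [add_sum_erase univ ν (mem_univ b) ▸ h.2]

theorem apply_self_nonpos_of_mem_nbeta {ν : Fin m → ℝ} (h : ν ∈ Nbeta b) : ν b ≤ 0 := by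
  rw [apply_self_eq_neg_sum_of_mem_nbeta h, neg_nonpos]
  exact sum_nonneg fun i hi => h.1 i (ne_of_mem_erase hi)

theorem eq_zero_of_mem_nbeta_of_apply_self_eq_zero {ν : Fin m → ℝ} (h : ν ∈ Nbeta b)
    (hb : ν b = 0) : ν = 0 := by
  have hsum : ∑ i ∈ univ.erase b, ν i = 0 := by linarith [apply_self_eq_neg_sum_of_mem_nbeta h]
  funext i
  rcases eq_or_ne i b with rfl | hib
  · exact hb
  · exact (sum_eq_zero_iff_of_nonneg fun j hj => h.1 j (ne_of_mem_erase hj)).1 hsum i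
      (mem_erase.2 ⟨hib, mem_univ i⟩)

theorem isClosed_nbeta (b : Fin m) : IsClosed (Nbeta b) := by
  have h : Nbeta b = (⋂ i ∈ {i | i ≠ b}, {ν : Fin m → ℝ | 0 ≤ ν i}) ∩ {ν | ∑ i, ν i = 0} := by
    ext ν
    simp [Nbeta]
  rw [h]
  exact (isClosed_biInter fun i _ => isClosed_le continuous_const (continuous_apply i)).inter
    (isClosed_eq (by fun_prop) continuous_const)

def sigmaEpi (X : Set (Fin n → ℝ)) (A : Fin m → Fin n → ℝ) (b : Fin m) :
    PointedCone ℝ ((Fin m → ℝ) × ℝ) where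
  carrier := {p | p.1 ∈ Nbeta b ∧ ∀ x ∈ X, -(p.1 ⬝ᵥ exponents A x) ≤ p.2}
  add_mem' := by
    rintro p q ⟨⟨hp₀, hp₁⟩, hp⟩ ⟨⟨hq₀, hq₁⟩, hq⟩
    refine ⟨⟨fun i hi => add_nonneg (hp₀ i hi) (hq₀ i hi), by simp [sum_add_distrib, hp₁, hq₁]⟩,
      fun x hx => ?_⟩
    simp only [Prod.fst_add, Prod.snd_add, add_dotProduct]
    linarith [hp x hx, hq x hx]
  zero_mem' := ⟨⟨fun _ _ => le_rfl, by simp⟩, fun x _ => by simp⟩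
  smul_mem' := by
    rintro ⟨c, hc⟩ p ⟨⟨hp₀, hp₁⟩, hp⟩
    refine ⟨⟨fun i hi => mul_nonneg hc (hp₀ i hi), by simp [← mul_sum, hp₁]⟩, fun x hx => ?_⟩
    simp only [Nonneg.mk_smul, Prod.smul_fst, Prod.smul_snd, smul_dotProduct, smul_eq_mul]
    nlinarith [hp x hx]

theorem mem_sigmaEpi {p : (Fin m → ℝ) × ℝ} :
    p ∈ sigmaEpi X A b ↔ p.1 ∈ Nbeta b ∧ sigA X A p.1 ≤ p.2 := by
  rw [sigA_le_coe_iff]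
  rfl

theorem isClosed_sigmaEpi (X : Set (Fin n → ℝ)) (A : Fin m → Fin n → ℝ) (b : Fin m) :
    IsClosed (sigmaEpi X A b : Set ((Fin m → ℝ) × ℝ)) := by
  have h : (sigmaEpi X A b : Set ((Fin m → ℝ) × ℝ)) = Prod.fst ⁻¹' Nbeta b ∩
      ⋂ x ∈ X, {p | -(p.1 ⬝ᵥ exponents A x) ≤ p.2} := by
    ext p
    simp [sigmaEpi]
  rw [h]
  exact ((isClosed_nbeta b).preimage continuous_fst).inter (isClosed_biInter fun x _ =>
    isClosed_le (continuous_fst.dotProduct continuous_const).neg continuous_snd)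

noncomputable def baseFunctional (A : Fin m → Fin n → ℝ) (x₀ : Fin n → ℝ) (b : Fin m) :
    (Fin m → ℝ) × ℝ →ₗ[ℝ] ℝ where
  toFun p := p.2 + p.1 ⬝ᵥ exponents A x₀ - p.1 b
  map_add' p q := by
    simp only [Prod.fst_add, Prod.snd_add, add_dotProduct, Pi.add_apply]
    ring
  map_smul' c p := by
    simp only [Prod.smul_fst, Prod.smul_snd, smul_dotProduct, Pi.smul_apply, smul_eq_mul,
      RingHom.id_apply]
    ring

theorem baseFunctional_pos {x₀ : Fin n → ℝ} (hx₀ : x₀ ∈ X) {p : (Fin m → ℝ) × ℝ}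
    (hp : p ∈ sigmaEpi X A b) (hp0 : p ≠ 0) : 0 < baseFunctional A x₀ b p := by
  obtain ⟨hN, hle⟩ := hp
  have h₁ := hle x₀ hx₀
  have h₂ := apply_self_nonpos_of_mem_nbeta hN
  by_contra! hnp
  have hb : p.1 b = 0 := by
    simp only [baseFunctional, LinearMap.coe_mk, AddHom.coe_mk] at hnp
    linarith
  have hp1 := eq_zero_of_mem_nbeta_of_apply_self_eq_zero hN hb
  refine hp0 (Prod.ext hp1 ?_)
  simp only [baseFunctional, LinearMap.coe_mk, AddHom.coe_mk, hp1, zero_dotProduct,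
    Pi.zero_apply] at hnp h₁
  simp only [Prod.snd_zero]
  linarith

theorem proportional_of_smul_eq_smul {ν₁ ν₂ v : Fin m → ℝ} {s t a c : ℝ} (hs : s ≠ 0)
    (ht : t ≠ 0) (h₁ : s • ν₁ = a • v) (h₂ : t • ν₂ = c • v) : Proportional ν₁ ν₂ := by
  have e₁ : ν₁ = (a / s) • v := by rw [div_eq_inv_mul, mul_smul, ← h₁, inv_smul_smul₀ hs]
  have e₂ : ν₂ = (c / t) • v := by rw [div_eq_inv_mul, mul_smul, ← h₂, inv_smul_smul₀ ht]
  rcases eq_or_ne c 0 with rfl | hc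
  · exact ⟨0, Or.inr (by simp [e₂])⟩
  · refine ⟨a / s / (c / t), Or.inl ?_⟩
    rw [e₁, e₂, smul_smul, div_mul_cancel₀ _ (div_ne_zero hc ht)]

theorem IsEdgeGenerator.snd_eq_toReal_sigA (hX : X.Nonempty) {z : (Fin m → ℝ) × ℝ}
    (hz : IsEdgeGenerator (sigmaEpi X A b : Set ((Fin m → ℝ) × ℝ)) z) (hz1 : z.1 ≠ 0) :
    z.2 = (sigA X A z.1).toReal := by
  obtain ⟨-, hzK, hray⟩ := hz
  obtain ⟨hN, hσ⟩ := mem_sigmaEpi.1 hzK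
  have hσtop : sigA X A z.1 ≠ ⊤ := ne_top_of_le_ne_top (EReal.coe_ne_top _) hσ
  set τ := (sigA X A z.1).toReal
  have hτ : τ ≤ z.2 := by
    simpa using EReal.toReal_le_toReal hσ (sigA_ne_bot hX _) (EReal.coe_ne_top _)
  have hu : (z.1, τ) ∈ sigmaEpi X A b := mem_sigmaEpi.2 ⟨hN, EReal.le_coe_toReal hσtop⟩
  have hw : ((0 : Fin m → ℝ), z.2 - τ) ∈ sigmaEpi X A b :=
    ⟨(sigmaEpi X A b).zero_mem.1, fun x _ => by simpa using hτ⟩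
  obtain ⟨-, a, -, hwa⟩ := hray _ hu _ hw (Prod.ext (add_zero _).symm (by simp))
  have ha : a = 0 := by
    have h := congrArg Prod.fst hwa
    simp only [Prod.smul_fst] at h
    exact (smul_eq_zero.1 h.symm).resolve_right hz1
  have h := congrArg Prod.snd hwa
  simp only [ha, zero_smul, Prod.snd_zero] at h
  linarith

theorem IsEdgeGenerator.isXCircuit (hX : X.Nonempty) {z : (Fin m → ℝ) × ℝ}
    (hz : IsEdgeGenerator (sigmaEpi X A b : Set ((Fin m → ℝ) × ℝ)) z) (hz1 : z.1 ≠ 0) :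
    IsXCircuit X A b z.1 := by
  have hτ := hz.snd_eq_toReal_sigA hX hz1
  obtain ⟨-, hzK, hray⟩ := hz
  obtain ⟨hN, hσ⟩ := mem_sigmaEpi.1 hzK
  have hσtop : sigA X A z.1 ≠ ⊤ := ne_top_of_le_ne_top (EReal.coe_ne_top _) hσ
  refine ⟨hN, hz1, hσtop.lt_top, ?_⟩
  rintro ⟨ν₁, ν₂, θ, hν₁, hν₂, hnp, ⟨hθ₀, hθ₁⟩, hz1eq, haff⟩
  have hθ' : 0 < 1 - θ := sub_pos.2 hθ₁
  have hsplit := haff θ ⟨hθ₀.le, hθ₁.le⟩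
  rw [← hz1eq] at hsplit
  obtain ⟨h₁, h₂⟩ := EReal.ne_top_of_coe_mul_add_coe_mul_ne_top hθ₀ hθ' (sigA_ne_bot hX ν₁)
    (sigA_ne_bot hX ν₂) (hsplit ▸ hσtop)
  set τ₁ := (sigA X A ν₁).toReal
  set τ₂ := (sigA X A ν₂).toReal
  have hτsplit : z.2 = θ * τ₁ + (1 - θ) * τ₂ := by
    rw [hτ, hsplit, ← EReal.coe_toReal h₁ (sigA_ne_bot hX ν₁),
      ← EReal.coe_toReal h₂ (sigA_ne_bot hX ν₂), ← EReal.coe_mul, ← EReal.coe_mul,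
      ← EReal.coe_add, EReal.toReal_coe]
  have hp₁ : θ • (ν₁, τ₁) ∈ sigmaEpi X A b :=
    (sigmaEpi X A b).smul_mem hθ₀.le (mem_sigmaEpi.2 ⟨hν₁, EReal.le_coe_toReal h₁⟩)
  have hp₂ : (1 - θ) • (ν₂, τ₂) ∈ sigmaEpi X A b :=
    (sigmaEpi X A b).smul_mem hθ'.le (mem_sigmaEpi.2 ⟨hν₂, EReal.le_coe_toReal h₂⟩)
  obtain ⟨⟨a, -, ha⟩, ⟨c, -, hc⟩⟩ :=
    hray _ hp₁ _ hp₂ (Prod.ext (by simpa using hz1eq) (by simpa using hτsplit))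
  exact hnp (proportional_of_smul_eq_smul hθ₀.ne' hθ'.ne' (congrArg Prod.fst ha)
    (congrArg Prod.fst hc))

theorem circuitGraph_eq_hull (X : Set (Fin n → ℝ)) (A : Fin m → Fin n → ℝ) :
    circuitGraph X A = PointedCone.hull ℝ (phiVec X A '' Lambda X A ∪ {((0 : Fin m → ℝ), 1)}) :=
  coneHull_eq_hull _

theorem IsEdgeGenerator.mem_circuitGraph (hX : X.Nonempty) {z : (Fin m → ℝ) × ℝ}
    (hz : IsEdgeGenerator (sigmaEpi X A b : Set ((Fin m → ℝ) × ℝ)) z) :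
    z ∈ circuitGraph X A := by
  rw [circuitGraph_eq_hull]
  obtain ⟨hN, hσ⟩ := hz.2.1
  rcases eq_or_ne z.1 0 with hz1 | hz1
  · obtain ⟨x, hx⟩ := hX
    have hz : z = z.2 • ((0 : Fin m → ℝ), (1 : ℝ)) := Prod.ext (by simp [hz1]) (by simp)
    rw [hz]
    exact PointedCone.smul_mem _ (by simpa [hz1] using hσ x hx)
      (PointedCone.subset_hull (Or.inr rfl))
  set c := -z.1 b
  have hc : 0 < c := neg_pos.2 ((apply_self_nonpos_of_mem_nbeta hN).lt_of_ne
    fun h => hz1 (eq_zero_of_mem_nbeta_of_apply_self_eq_zero hN h))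
  have hz' := hz.smul (inv_pos.2 hc)
  have hl1 : (c⁻¹ • z).1 ≠ 0 := by simpa [hc.ne'] using hz1
  have hlΛ : (c⁻¹ • z).1 ∈ Lambda X A :=
    Set.mem_iUnion.2 ⟨b, hz'.isXCircuit hX hl1, by simp [c, inv_mul_cancel₀ (neg_pos.1 hc).ne]⟩
  have hphi : c⁻¹ • z = phiVec X A (c⁻¹ • z).1 := Prod.ext rfl (hz'.snd_eq_toReal_sigA hX hl1)
  rw [← smul_inv_smul₀ hc.ne' z, hphi]
  exact PointedCone.smul_mem _ hc.le (PointedCone.subset_hull (Or.inl ⟨_, hlΛ, rfl⟩))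

theorem sigmaEpi_le_hull (hX : X.Nonempty) (b : Fin m) :
    sigmaEpi X A b ≤ PointedCone.hull ℝ (phiVec X A '' Lambda X A ∪ {((0 : Fin m → ℝ), 1)}) := by
  obtain ⟨x₀, hx₀⟩ := hX
  refine PointedCone.le_of_forall_isEdgeGenerator_mem (isClosed_sigmaEpi X A b)
    (baseFunctional A x₀ b) (fun p hp hp0 => baseFunctional_pos hx₀ hp hp0) fun z hz => ?_
  have hz := hz.mem_circuitGraph ⟨x₀, hx₀⟩
  rwa [circuitGraph_eq_hull] at hz

theorem circuitGraph_eq_iSup_sigmaEpi (hX : X.Nonempty) (hm : 0 < m) :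
    circuitGraph X A = ((⨆ b, sigmaEpi X A b : PointedCone ℝ _) : Set ((Fin m → ℝ) × ℝ)) := by
  rw [circuitGraph_eq_hull]
  congr 1
  refine le_antisymm (Submodule.span_le.2 ?_) (iSup_le (sigmaEpi_le_hull hX))
  rintro _ (⟨l, hl, rfl⟩ | rfl)
  · obtain ⟨b, ⟨hN, -, hσ, -⟩, -⟩ := Set.mem_iUnion.1 hl
    exact Submodule.mem_iSup_of_mem b (mem_sigmaEpi.2 ⟨hN, EReal.le_coe_toReal hσ.ne⟩)
  · exact Submodule.mem_iSup_of_mem ⟨0, hm⟩ ⟨(sigmaEpi X A _).zero_mem.1, fun x _ => by simp⟩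

theorem ExpLinIndep.exists_exponents_sub_ne (hLI : ExpLinIndep X A) {x₀ : Fin n → ℝ}
    {a c : Fin m} (hac : a ≠ c) :
    ∃ x ∈ X, exponents A x a - exponents A x₀ a ≠ exponents A x c - exponents A x₀ c := by
  by_contra! h
  refine hac (hLI.eq_of_smul_apply_eq_smul_apply (Real.exp (-exponents A x₀ a))
    (Real.exp (-exponents A x₀ c)) a c (Real.exp_ne_zero _) (funext fun x => ?_))
  simp only [Pi.smul_apply, smul_eq_mul, ← Real.exp_add]
  congr 1
  simp only [exponents] at h ⊢
  linarith [h x x.2]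

theorem ExpLinIndep.exists_sample_injective (hLI : ExpLinIndep X A) {x₀ : Fin n → ℝ}
    (hx₀ : x₀ ∈ X) : ∃ w : Fin m × Fin m → Fin n → ℝ, (∀ p, w p ∈ X) ∧
      Function.Injective fun a p => exponents A (w p) a - exponents A x₀ a := by
  have hwit : ∀ p : Fin m × Fin m, ∃ x ∈ X, p.1 ≠ p.2 →
      exponents A x p.1 - exponents A x₀ p.1 ≠ exponents A x p.2 - exponents A x₀ p.2 := by
    intro p
    by_cases hp : p.1 = p.2
    · exact ⟨x₀, hx₀, fun h => absurd hp h⟩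
    · obtain ⟨x, hx, hne⟩ := hLI.exists_exponents_sub_ne (x₀ := x₀) hp
      exact ⟨x, hx, fun _ => hne⟩
  choose w hwX hw using hwit
  exact ⟨w, hwX, fun a c hac => by_contra fun hne => hw (a, c) hne (congrFun hac (a, c))⟩

theorem eq_zero_of_sum_eq_zero_of_mem_sigmaEpi (hX : X.Nonempty) (hLI : ExpLinIndep X A)
    (f : Fin m → (Fin m → ℝ) × ℝ) (hf : ∀ b, f b ∈ sigmaEpi X A b) (hsum : ∑ b, f b = 0) :
    ∀ b, f b = 0 := by
  obtain ⟨x₀, hx₀⟩ := hX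
  have hsum₁ : ∑ b, (f b).1 = 0 := by rw [← Prod.fst_sum, hsum, Prod.fst_zero]
  have hsum₂ : ∑ b, (f b).2 = 0 := by rw [← Prod.snd_sum, hsum, Prod.snd_zero]
  have htight : ∀ x ∈ X, ∀ b, (f b).2 + (f b).1 ⬝ᵥ exponents A x = 0 := by
    intro x hx
    have htotal : ∑ b, ((f b).2 + (f b).1 ⬝ᵥ exponents A x) = 0 := by
      rw [sum_add_distrib, hsum₂, ← sum_dotProduct, hsum₁, zero_dotProduct, add_zero]
    intro b
    exact (sum_eq_zero_iff_of_nonneg fun b _ => by linarith [(hf b).2 x hx]).1 htotal b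
      (mem_univ b)
  obtain ⟨w, hwX, hw⟩ := hLI.exists_sample_injective hx₀
  have hfst : (fun b => (f b).1) = 0 := by
    refine eq_zero_of_sum_smul_eq_zero hw (fun b a hab => (hf b).1.1 a hab) (fun b => (hf b).1.2)
      hsum₁ fun b => funext fun p => ?_
    have h₁ := htight _ (hwX p) b
    have h₂ := htight _ hx₀ b
    simp only [Finset.sum_apply, Pi.smul_apply, smul_eq_mul, Pi.zero_apply, mul_sub,
      sum_sub_distrib]
    simp only [dotProduct] at h₁ h₂
    linarith
  intro b
  have h₁ : (f b).1 = 0 := congrFun hfst b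
  have h₂ := htight x₀ hx₀ b
  rw [h₁, zero_dotProduct, add_zero] at h₂
  exact Prod.ext h₁ h₂

end CircuitGraph

theorem statement15_general {n m : ℕ} (X : Set (Fin n → ℝ)) (hXne : X.Nonempty) (A : Fin m → Fin n → ℝ)
    (hm : 0 < m) (hLI : ExpLinIndep X A) :
    IsClosed (circuitGraph X A) := by
  rw [circuitGraph_eq_iSup_sigmaEpi hXne hm]
  exact PointedCone.isClosed_iSup (isClosed_sigmaEpi X A)
    (eq_zero_of_sum_eq_zero_of_mem_sigmaEpi hXne hLI)

theorem statement15 {n m : ℕ} (X : Set (Fin n → ℝ)) (hXne : X.Nonempty) (hXcl : IsClosed X)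
    (hXcv : Convex ℝ X) (A : Fin m → Fin n → ℝ) (hA : Function.Injective A) (hm : 0 < m)
    (hLI : ExpLinIndep X A) :
    IsClosed (circuitGraph X A) :=
  statement15_general X hXne A hm hLI
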